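/- arXiv:1706.04502 — 2 statements merged into one kernel-verified Lean document; each statement's English description precedes it below -/
import Mathlib

section
/- Let p be prime, d ∈ ℕ, β > 1, τ ∈ (0,1), and let γ = (γ_j)_{j≥1} be weights with 0 < γ_j ≤ 1. Then there exist at least ⌈τ(p−1)^d⌉ vectors z ∈ {1,…,p−1}^d such that P_{β,γ}(p,z) ≤ (1/(1−τ)) · V_d(β,γ)/p. -/
open scoped BigOperators
open Classical

noncomputable section

/-- The Riemann zeta function for real argument `β > 1`, as a real series. -/
def zetaR (β : ℝ) : ℝ := ∑' n : ℕ, 1 / ((n : ℝ) + 1) ^ β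

/-- The weight function `r_{α,γ}(h) = ∏_j max {1, |h_j|^α / γ_j}`. -/
def rwt (d : ℕ) (α : ℝ) (γ : ℕ → ℝ) (h : Fin d → ℤ) : ℝ :=
  ∏ j : Fin d, max 1 (|(h j : ℝ)| ^ α / γ j)

/-- `V_d(β,γ) = 3 ∏_{j=1}^d (1 + 2 γ_j ζ(β))`. -/
def Vd (d : ℕ) (β : ℝ) (γ : ℕ → ℝ) : ℝ :=
  3 * ∏ j : Fin d, (1 + 2 * γ j * zetaR β)

/-- The set of primes `p` with `⌈n/2⌉ + 1 ≤ p ≤ n`. -/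
def Pset (n : ℕ) : Finset ℕ := (Finset.Icc ((n + 1) / 2 + 1) n).filter Nat.Prime

/-- The set of generating vectors `{1,…,p−1}^d`. -/
def genSet (d p : ℕ) : Finset (Fin d → ℕ) := Fintype.piFinset fun _ => Finset.Icc 1 (p - 1)

/-- The nonzero points of the dual lattice: `h ≠ 0` with `h·z ≡ 0 (mod p)`. -/
def dual (d p : ℕ) (z : Fin d → ℕ) : Set (Fin d → ℤ) :=
  {h | h ≠ 0 ∧ (p : ℤ) ∣ ∑ j, h j * (z j : ℤ)}

/-- `ρ_{α,γ}(p,z) = min { r_{α,γ}(h) : h ∈ dual lattice, h ≠ 0 }`. -/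
def rho (d : ℕ) (α : ℝ) (γ : ℕ → ℝ) (p : ℕ) (z : Fin d → ℕ) : ℝ :=
  sInf (rwt d α γ '' dual d p z)

/-- `P_{β,γ}(p,z) = ∑_{h ∈ dual lattice, h ≠ 0} 1 / r_{β,γ}(h)`. -/
def Pqual (d : ℕ) (β : ℝ) (γ : ℕ → ℝ) (p : ℕ) (z : Fin d → ℕ) : ℝ :=
  ∑' h : dual d p z, 1 / rwt d β γ h.1

/-- The set `Z_p` of good generating vectors. -/
def Zp (d : ℕ) (α : ℝ) (γ : ℕ → ℝ) (p : ℕ) : Finset (Fin d → ℕ) :=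
  (genSet d p).filter fun z => ∀ lam ∈ Set.Ioo (0 : ℝ) α,
    ((p : ℝ) / (2 * Vd d (α / lam) fun j => γ j ^ (1 / lam))) ^ lam ≤ rho d α γ p z

/-- The randomized error quantity of the randomized lattice algorithm `M_n`,
applied to a function with Fourier coefficients `a`. -/
def Err (d : ℕ) (α : ℝ) (γ : ℕ → ℝ) (n : ℕ) (a : (Fin d → ℤ) → ℂ) : ℝ :=
  (1 / ((Pset n).card : ℝ)) * ∑ p ∈ Pset n,
    (1 / ((Zp d α γ p).card : ℝ)) * ∑ z ∈ Zp d α γ p, ‖∑' h : dual d p z, a h.1‖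

/-!
A nonzero `h` lies in the dual lattice of at most `(p - 1)^(d - 1)` of the vectors
`z ∈ {1,…,p-1}^d` unless `p ∣ h`, in which case it lies in all of them. Averaging over `z`
therefore bounds the mean of `P_{β,γ}(p, ·)` by
`(1/(p - 1)) ∑_{h ≠ 0} 1/r(h) + ∑_{m ≠ 0} 1/r(p m)`.
Since `1/r` is a product of one-dimensional weights, each dominated by `1` at `0` and by
`γ_j/|k|^β` elsewhere, the two sums are at most `W - 1` and `(W - 1)/p` with
`W = ∏_j (1 + 2 γ_j ζ(β))`; as `1/(p - 1) ≤ 2/p`, the mean is at most `3W/p = V_d(β,γ)/p`.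
Markov's inequality then leaves at most a fraction `1 - τ` of the vectors above
`V_d(β,γ)/((1 - τ) p)`.
-/

open Finset

lemma summable_one_div_nat_add_one_rpow {β : ℝ} (hβ : 1 < β) :
    Summable fun n : ℕ => 1 / ((n : ℝ) + 1) ^ β :=
  ((Real.summable_one_div_nat_add_rpow 1 β).2 hβ).congr fun n => by
    rw [abs_of_nonneg (by positivity)]

lemma zetaR_nonneg (β : ℝ) : 0 ≤ zetaR β :=
  tsum_nonneg fun _ => by positivity

lemma Vd_pos {d : ℕ} {β : ℝ} {γ : ℕ → ℝ} (hγ : ∀ j, 0 ≤ γ j) : 0 < Vd d β γ :=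
  mul_pos three_pos <| prod_pos fun j _ => by
    have := mul_nonneg (hγ j) (zetaR_nonneg β)
    linarith

lemma hasSum_int_ite_div_abs_rpow {β : ℝ} (hβ : 1 < β) (c : ℝ) :
    HasSum (fun k : ℤ => if k = 0 then 1 else c / |(k : ℝ)| ^ β) (1 + 2 * c * zetaR β) := by
  set f : ℤ → ℝ := fun k => if k = 0 then 1 else c / |(k : ℝ)| ^ β
  have hζ : HasSum (fun n : ℕ => c / ((n : ℝ) + 1) ^ β) (c * zetaR β) := by
    have := (summable_one_div_nat_add_one_rpow hβ).hasSum.mul_left c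
    simp only [mul_one_div] at this
    exact this
  have hpos : HasSum (fun n : ℕ => f (n + 1)) (c * zetaR β) := by
    refine hζ.congr_fun fun n => ?_
    simp only [f]
    push_cast
    rw [if_neg (by omega), abs_of_nonneg (by positivity)]
  have hneg : HasSum (fun n : ℕ => f (-(n + 1))) (c * zetaR β) := by
    refine hζ.congr_fun fun n => ?_
    simp only [f]
    push_cast
    rw [if_neg (by omega), abs_neg, abs_of_nonneg (by positivity)]
  convert HasSum.of_add_one_of_neg_add_one hpos hneg using 1
  simp only [f, if_true]
  ring

lemma inv_max_one_rpow_div_le {β c q x : ℝ} (hβ : 1 ≤ β) (hc : 0 < c) (hq : 1 ≤ q)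
    (hx : x ≠ 0) : (max 1 (|q * x| ^ β / c))⁻¹ ≤ c / q / |x| ^ β := by
  have hx' : 0 < |x| ^ β := by positivity
  calc (max 1 (|q * x| ^ β / c))⁻¹ ≤ (|q * x| ^ β / c)⁻¹ :=
        inv_anti₀ (by positivity) (le_max_right _ _)
    _ = c / (q ^ β * |x| ^ β) := by
        rw [inv_div, abs_mul, Real.mul_rpow (abs_nonneg _) (abs_nonneg _),
          abs_of_pos (by linarith)]
    _ ≤ c / (q * |x| ^ β) := by
        gcongr
        exact Real.self_le_rpow_of_one_le hq hβ
    _ = c / q / |x| ^ β := by rw [div_div]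

lemma inv_max_one_rpow_div_le_ite {β c q : ℝ} (hβ : 1 < β) (hc : 0 < c) (hq : 1 ≤ q) (k : ℤ) :
    (max 1 (|q * k| ^ β / c))⁻¹ ≤ if k = 0 then 1 else c / q / |(k : ℝ)| ^ β := by
  split_ifs with hk
  · simp [hk, Real.zero_rpow (by linarith : β ≠ 0)]
  · exact inv_max_one_rpow_div_le hβ.le hc hq (by exact_mod_cast hk)

lemma summable_inv_max_one_rpow_div {β c q : ℝ} (hβ : 1 < β) (hc : 0 < c) (hq : 1 ≤ q) :
    Summable fun k : ℤ => (max 1 (|q * k| ^ β / c))⁻¹ :=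
  (hasSum_int_ite_div_abs_rpow hβ (c / q)).summable.of_nonneg_of_le (fun _ => by positivity)
    (inv_max_one_rpow_div_le_ite hβ hc hq)

lemma tsum_inv_max_one_rpow_div_le {β c q : ℝ} (hβ : 1 < β) (hc : 0 < c) (hq : 1 ≤ q) :
    ∑' k : ℤ, (max 1 (|q * k| ^ β / c))⁻¹ ≤ 1 + 2 * (c / q) * zetaR β :=
  hasSum_le (inv_max_one_rpow_div_le_ite hβ hc hq)
    (summable_inv_max_one_rpow_div hβ hc hq).hasSum (hasSum_int_ite_div_abs_rpow hβ (c / q))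

section PiProd

variable {ι κ : Type*} [Fintype ι] {f : ι → κ → ℝ}

lemma sum_pi_prod_le_prod_tsum (hf : ∀ i k, 0 ≤ f i k) (hs : ∀ i, Summable (f i))
    (u : Finset (ι → κ)) : ∑ x ∈ u, ∏ i, f i (x i) ≤ ∏ i, ∑' k, f i k := by
  classical
  calc ∑ x ∈ u, ∏ i, f i (x i)
      ≤ ∑ x ∈ Fintype.piFinset fun i => u.image (· i), ∏ i, f i (x i) :=
        sum_le_sum_of_subset_of_nonneg
          (fun x hx => Fintype.mem_piFinset.2 fun i => mem_image_of_mem _ hx)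
          (fun x _ _ => prod_nonneg fun i _ => hf i _)
    _ = ∏ i, ∑ k ∈ u.image (· i), f i k := (prod_univ_sum _ _).symm
    _ ≤ ∏ i, ∑' k, f i k := prod_le_prod (fun i _ => sum_nonneg fun k _ => hf i k)
        fun i _ => (hs i).sum_le_tsum _ fun k _ => hf i k

lemma summable_pi_prod (hf : ∀ i k, 0 ≤ f i k) (hs : ∀ i, Summable (f i)) :
    Summable fun x : ι → κ => ∏ i, f i (x i) :=
  summable_of_sum_le (fun _ => prod_nonneg fun i _ => hf i _) (sum_pi_prod_le_prod_tsum hf hs)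

lemma tsum_pi_prod_le (hf : ∀ i k, 0 ≤ f i k) (hs : ∀ i, Summable (f i)) :
    ∑' x : ι → κ, ∏ i, f i (x i) ≤ ∏ i, ∑' k, f i k :=
  (summable_pi_prod hf hs).tsum_le_of_sum_le (sum_pi_prod_le_prod_tsum hf hs)

end PiProd

lemma prod_one_add_div_le {ι : Type*} (s : Finset ι) {a : ι → ℝ} {q : ℝ}
    (ha : ∀ i ∈ s, 0 ≤ a i) (hq : 1 ≤ q) :
    ∏ i ∈ s, (1 + a i / q) ≤ 1 + (∏ i ∈ s, (1 + a i) - 1) / q := by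
  induction s using Finset.cons_induction with
  | empty => simp
  | cons i s hi ih =>
    rw [prod_cons, prod_cons]
    have hai : 0 ≤ a i := ha i (mem_cons_self i s)
    have hs : ∀ j ∈ s, 0 ≤ a j := fun j hj => ha j (mem_cons_of_mem hj)
    have hP : 1 ≤ ∏ j ∈ s, (1 + a j) := one_le_prod fun j hj => by linarith [hs j hj]
    have hq0 : 0 < q := by linarith
    calc (1 + a i / q) * ∏ j ∈ s, (1 + a j / q)
        ≤ (1 + a i / q) * (1 + (∏ j ∈ s, (1 + a j) - 1) / q) := by
          gcongr
          exact ih hs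
      _ ≤ 1 + ((1 + a i) * ∏ j ∈ s, (1 + a j) - 1) / q := by
          rw [← sub_nonneg]
          have key : 1 + ((1 + a i) * ∏ j ∈ s, (1 + a j) - 1) / q
              - (1 + a i / q) * (1 + (∏ j ∈ s, (1 + a j) - 1) / q)
              = a i * (∏ j ∈ s, (1 + a j) - 1) * (q - 1) / (q * q) := by
            field_simp; ring
          rw [key]
          have := sub_nonneg.2 hP
          have := sub_nonneg.2 hq
          positivity

section Weights

variable {d : ℕ} {β : ℝ} {γ : ℕ → ℝ}

lemma one_le_rwt (h : Fin d → ℤ) : 1 ≤ rwt d β γ h :=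
  one_le_prod fun _ _ => le_max_left _ _

lemma one_div_rwt_nonneg (h : Fin d → ℤ) : 0 ≤ 1 / rwt d β γ h :=
  one_div_nonneg.2 (zero_le_one.trans (one_le_rwt h))

lemma rwt_zero (hβ : 0 < β) : rwt d β γ 0 = 1 := by
  simp [rwt, Real.zero_rpow hβ.ne']

lemma one_div_rwt_natCast_mul (q : ℕ) (m : Fin d → ℤ) :
    1 / rwt d β γ (fun j => q * m j) = ∏ j, (max 1 (|(q : ℝ) * m j| ^ β / γ j))⁻¹ := by
  rw [rwt, one_div, ← prod_inv_distrib]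
  push_cast
  rfl

lemma summable_one_div_rwt_natCast_mul (hβ : 1 < β) (hγ : ∀ j, 0 < γ j) {q : ℕ} (hq : 0 < q) :
    Summable fun m : Fin d → ℤ => 1 / rwt d β γ (fun j => q * m j) := by
  simp only [one_div_rwt_natCast_mul]
  exact summable_pi_prod (f := fun (j : Fin d) (k : ℤ) => (max 1 (|(q : ℝ) * k| ^ β / γ j))⁻¹)
    (fun _ _ => by positivity)
    fun j => summable_inv_max_one_rpow_div hβ (hγ j) (by exact_mod_cast hq)

lemma tsum_one_div_rwt_natCast_mul_le (hβ : 1 < β) (hγ : ∀ j, 0 < γ j) {q : ℕ} (hq : 0 < q) :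
    ∑' m : Fin d → ℤ, 1 / rwt d β γ (fun j => q * m j)
      ≤ ∏ j : Fin d, (1 + 2 * γ j * zetaR β / q) := by
  simp only [one_div_rwt_natCast_mul]
  refine (tsum_pi_prod_le (f := fun (j : Fin d) (k : ℤ) => (max 1 (|(q : ℝ) * k| ^ β / γ j))⁻¹)
    (fun _ _ => by positivity)
    fun j => summable_inv_max_one_rpow_div hβ (hγ j) (by exact_mod_cast hq)).trans ?_
  exact prod_le_prod (fun _ _ => tsum_nonneg fun _ => by positivity)
    fun j _ => (tsum_inv_max_one_rpow_div_le hβ (hγ j) (by exact_mod_cast hq)).trans_eq (by ring)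

lemma summable_one_div_rwt (hβ : 1 < β) (hγ : ∀ j, 0 < γ j) :
    Summable fun h : Fin d → ℤ => 1 / rwt d β γ h := by
  simpa using summable_one_div_rwt_natCast_mul hβ hγ one_pos

lemma tsum_indicator_ne_zero_one_div_rwt_le (hβ : 1 < β) (hγ : ∀ j, 0 < γ j) :
    ∑' h, {h : Fin d → ℤ | h ≠ 0}.indicator (fun h => 1 / rwt d β γ h) h
      ≤ ∏ j : Fin d, (1 + 2 * γ j * zetaR β) - 1 := by
  have hle : ∑' h : Fin d → ℤ, 1 / rwt d β γ h ≤ ∏ j : Fin d, (1 + 2 * γ j * zetaR β) := by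
    simpa using tsum_one_div_rwt_natCast_mul_le hβ hγ one_pos
  have hsplit := (summable_one_div_rwt (d := d) hβ hγ).tsum_eq_add_tsum_ite 0
  rw [rwt_zero (by linarith), div_one] at hsplit
  have hind : {h : Fin d → ℤ | h ≠ 0}.indicator (fun h => 1 / rwt d β γ h)
      = fun h => if h = 0 then 0 else 1 / rwt d β γ h := by
    ext h
    simp [Set.indicator_apply, ite_not]
  rw [hind]
  linarith

lemma tsum_indicator_dvd_one_div_rwt_le {p : ℕ} (hp : 0 < p) (hβ : 1 < β) (hγ : ∀ j, 0 < γ j) :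
    ∑' h, {h : Fin d → ℤ | h ≠ 0 ∧ ∀ j, (p : ℤ) ∣ h j}.indicator (fun h => 1 / rwt d β γ h) h
      ≤ (∏ j : Fin d, (1 + 2 * γ j * zetaR β) - 1) / p := by
  set D := {h : Fin d → ℤ | h ≠ 0 ∧ ∀ j, (p : ℤ) ∣ h j}
  have hp' : (p : ℤ) ≠ 0 := by exact_mod_cast hp.ne'
  have hinj : Function.Injective fun (m : Fin d → ℤ) j => (p : ℤ) * m j :=
    fun m m' hmm' => funext fun j => mul_left_cancel₀ hp' (congrFun hmm' j)
  have hsupp : Function.support (D.indicator fun h => 1 / rwt d β γ h)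
      ⊆ Set.range fun (m : Fin d → ℤ) j => (p : ℤ) * m j := fun h hh =>
    ⟨fun j => h j / p,
      funext fun j => Int.mul_ediv_cancel' ((Set.mem_of_indicator_ne_zero hh).2 j)⟩
  have hD : ∀ m : Fin d → ℤ, D.indicator (fun h => 1 / rwt d β γ h) (fun j => (p : ℤ) * m j)
      = if m = 0 then 0 else 1 / rwt d β γ (fun j => (p : ℤ) * m j) := by
    intro m
    have hm0 : (fun j => (p : ℤ) * m j) = 0 ↔ m = 0 := hinj.eq_iff' (by ext; simp)
    by_cases hm : m = 0
    · rw [if_pos hm, Set.indicator_of_notMem fun hmem => hmem.1 (hm0.2 hm)]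
    · rw [if_neg hm, Set.indicator_of_mem]
      exact ⟨mt hm0.1 hm, fun j => dvd_mul_right _ _⟩
  rw [← hinj.tsum_eq hsupp]
  simp only [hD]
  have hsplit := (summable_one_div_rwt_natCast_mul (d := d) hβ hγ hp).tsum_eq_add_tsum_ite 0
  simp only [Pi.zero_apply, mul_zero] at hsplit
  rw [show (fun _ : Fin d => (0 : ℤ)) = 0 from rfl, rwt_zero (by linarith), div_one] at hsplit
  have hle := (tsum_one_div_rwt_natCast_mul_le (d := d) hβ hγ hp).trans
    (prod_one_add_div_le univ (a := fun j : Fin d => 2 * γ j * zetaR β)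
      (fun j _ => by have := hγ j; have := zetaR_nonneg β; positivity)
      (Nat.one_le_cast.2 hp))
  linarith

end Weights

lemma apply_eq_of_dvd_sum_mul {ι : Type*} [Fintype ι] {p : ℕ} (hp : p.Prime) {h : ι → ℤ}
    {i : ι} (hi : ¬ (p : ℤ) ∣ h i) {z z' : ι → ℕ} (hz : (p : ℤ) ∣ ∑ j, h j * z j)
    (hz' : (p : ℤ) ∣ ∑ j, h j * z' j) (hzz' : ∀ j ≠ i, z j = z' j) (hlt : z i < p)
    (hlt' : z' i < p) : z i = z' i := by
  have hdiff : ∑ j, h j * z j - ∑ j, h j * z' j = h i * ((z i : ℤ) - z' i) := by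
    rw [← sum_sub_distrib, sum_eq_single i (fun j _ hj => by rw [hzz' j hj, sub_self])
      (fun hi => absurd (mem_univ i) hi)]
    ring
  have hdvd : (p : ℤ) ∣ (z i : ℤ) - z' i :=
    (Int.Prime.dvd_mul' hp (hdiff ▸ dvd_sub hz hz')).resolve_left hi
  have := Int.eq_zero_of_abs_lt_dvd hdvd (by rw [abs_lt]; omega)
  omega

lemma mem_genSet {d p : ℕ} {z : Fin d → ℕ} : z ∈ genSet d p ↔ ∀ j, z j ∈ Icc 1 (p - 1) :=
  Fintype.mem_piFinset

lemma card_genSet (d p : ℕ) : #(genSet d p) = (p - 1) ^ d := by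
  simp [genSet]

lemma card_filter_mem_dual_mul_le {d p : ℕ} (hp : p.Prime) {h : Fin d → ℤ} {i : Fin d}
    (hi : ¬ (p : ℤ) ∣ h i) : #{z ∈ genSet d p | h ∈ dual d p z} * (p - 1) ≤ (p - 1) ^ d := by
  -- Overwriting coordinate `i` loses nothing: the congruence `h·z ≡ 0` determines `z i`.
  calc #{z ∈ genSet d p | h ∈ dual d p z} * (p - 1)
      = #({z ∈ genSet d p | h ∈ dual d p z} ×ˢ Icc 1 (p - 1)) := by simp
    _ ≤ #(genSet d p) := by
        refine card_le_card_of_injOn (fun x => Function.update x.1 i x.2) ?_ ?_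
        · rintro ⟨z, t⟩ hzt
          simp only [coe_product, coe_filter, Set.mem_prod, Set.mem_ofPred_eq, mem_coe] at hzt
          refine mem_genSet.2 fun j => ?_
          rcases eq_or_ne j i with rfl | hj
          · simpa using hzt.2
          · simpa [hj] using mem_genSet.1 hzt.1.1 j
        · rintro ⟨z, t⟩ hzt ⟨z', t'⟩ hzt' heq
          simp only [coe_product, coe_filter, Set.mem_prod, Set.mem_ofPred_eq, mem_coe] at hzt hzt'
          have ht : t = t' := by simpa using congrFun heq i
          have hzz' : ∀ j ≠ i, z j = z' j := fun j hj => by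
            simpa [hj] using congrFun heq j
          have hlt : ∀ y ∈ genSet d p, y i < p := fun y hy => by
            have := mem_Icc.1 (mem_genSet.1 hy i)
            omega
          have hzi := apply_eq_of_dvd_sum_mul hp hi hzt.1.2.2 hzt'.1.2.2 hzz'
            (hlt z hzt.1.1) (hlt z' hzt'.1.1)
          ext1
          · funext j
            rcases eq_or_ne j i with rfl | hj
            · exact hzi
            · exact hzz' j hj
          · exact ht
    _ = (p - 1) ^ d := card_genSet d p

lemma ceil_mul_card_le_card_filter_le {α : Type*} (s : Finset α) {f : α → ℝ} {τ a : ℝ}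
    (hf : ∀ x ∈ s, 0 ≤ f x) (hτ : τ < 1) (ha : 0 < a) (hsum : ∑ x ∈ s, f x ≤ #s * a) :
    ⌈τ * #s⌉₊ ≤ #{x ∈ s | f x ≤ 1 / (1 - τ) * a} := by
  set t := 1 / (1 - τ) * a
  have hτ' : 0 < 1 - τ := by linarith
  have ht : 0 < t := by positivity
  have hbad : (#{x ∈ s | ¬ f x ≤ t} : ℝ) * t ≤ #s * (1 - τ) * t :=
    calc (#{x ∈ s | ¬ f x ≤ t} : ℝ) * t = ∑ x ∈ s with ¬ f x ≤ t, t := by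
          rw [sum_const, nsmul_eq_mul]
      _ ≤ ∑ x ∈ s with ¬ f x ≤ t, f x := sum_le_sum fun x hx => (not_le.1 (mem_filter.1 hx).2).le
      _ ≤ ∑ x ∈ s, f x :=
          sum_le_sum_of_subset_of_nonneg (filter_subset _ _) fun x hx _ => hf x hx
      _ ≤ #s * (1 - τ) * t := by
          rw [mul_assoc, show (1 - τ) * t = a by simp only [t]; field_simp]
          exact hsum
  have hcard : (#{x ∈ s | f x ≤ t} : ℝ) + #{x ∈ s | ¬ f x ≤ t} = #s := by
    exact_mod_cast card_filter_add_card_filter_not _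
  rw [Nat.ceil_le]
  nlinarith [le_of_mul_le_mul_right hbad ht]

section Average

variable {d p : ℕ} {β : ℝ} {γ : ℕ → ℝ}

lemma sum_Pqual_eq_tsum (hβ : 1 < β) (hγ : ∀ j, 0 < γ j) :
    ∑ z ∈ genSet d p, Pqual d β γ p z
      = ∑' h, (#{z ∈ genSet d p | h ∈ dual d p z} : ℝ) * (1 / rwt d β γ h) := by
  simp only [Pqual]
  rw [sum_congr rfl fun z _ => tsum_subtype (dual d p z) fun h => 1 / rwt d β γ h]
  rw [← Summable.tsum_finsetSum fun z _ => (summable_one_div_rwt hβ hγ).indicator _]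
  refine tsum_congr fun h => ?_
  simp [Set.indicator_apply, sum_ite, sum_const]

lemma card_filter_mem_dual_mul_one_div_rwt_le (hp : p.Prime) (h : Fin d → ℤ) :
    (#{z ∈ genSet d p | h ∈ dual d p z} : ℝ) * (1 / rwt d β γ h)
      ≤ ((p - 1) ^ d : ℕ) / ((p - 1 : ℕ) : ℝ) *
          {h : Fin d → ℤ | h ≠ 0}.indicator (fun h => 1 / rwt d β γ h) h
        + ((p - 1) ^ d : ℕ) *
          {h : Fin d → ℤ | h ≠ 0 ∧ ∀ j, (p : ℤ) ∣ h j}.indicator (fun h => 1 / rwt d β γ h) h := by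
  have hg := one_div_rwt_nonneg (β := β) (γ := γ) h
  have hp1 : (0 : ℝ) < (p - 1 : ℕ) := by have := hp.two_le; exact_mod_cast (by omega : 0 < p - 1)
  by_cases h0 : h = 0
  · have : #{z ∈ genSet d p | h ∈ dual d p z} = 0 := card_eq_zero.2 <|
      filter_eq_empty_iff.2 fun z _ hz => hz.1 h0
    rw [this]
    simp [h0]
  rw [Set.indicator_of_mem (s := {h : Fin d → ℤ | h ≠ 0}) h0]
  by_cases hall : ∀ j, (p : ℤ) ∣ h j
  · rw [Set.indicator_of_mem (s := {h : Fin d → ℤ | h ≠ 0 ∧ ∀ j, (p : ℤ) ∣ h j}) ⟨h0, hall⟩]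
    have hcard : (#{z ∈ genSet d p | h ∈ dual d p z} : ℝ) ≤ ((p - 1) ^ d : ℕ) := by
      exact_mod_cast (card_filter_le _ _).trans (card_genSet d p).le
    have : 0 ≤ ((p - 1) ^ d : ℕ) / ((p - 1 : ℕ) : ℝ) * (1 / rwt d β γ h) := by positivity
    nlinarith
  · obtain ⟨i, hi⟩ := not_forall.1 hall
    rw [Set.indicator_of_notMem fun hmem => hi (hmem.2 i), mul_zero, add_zero]
    have hcard : (#{z ∈ genSet d p | h ∈ dual d p z} : ℝ)
        ≤ ((p - 1) ^ d : ℕ) / ((p - 1 : ℕ) : ℝ) := by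
      rw [le_div_iff₀ hp1]
      exact_mod_cast card_filter_mem_dual_mul_le hp hi
    exact mul_le_mul_of_nonneg_right hcard hg

theorem sum_Pqual_le (hp : p.Prime) (hβ : 1 < β) (hγ : ∀ j, 0 < γ j) :
    ∑ z ∈ genSet d p, Pqual d β γ p z ≤ ((p - 1) ^ d : ℕ) * (Vd d β γ / p) := by
  set g := fun h : Fin d → ℤ => 1 / rwt d β γ h
  set W := ∏ j : Fin d, (1 + 2 * γ j * zetaR β)
  set N : ℝ := (((p - 1) ^ d : ℕ) : ℝ)
  set c : ℝ := N / ((p - 1 : ℕ) : ℝ)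
  set u := {h : Fin d → ℤ | h ≠ 0}.indicator g
  set v := {h : Fin d → ℤ | h ≠ 0 ∧ ∀ j, (p : ℤ) ∣ h j}.indicator g
  have hg := summable_one_div_rwt (d := d) hβ hγ
  have hu : ∑' h, u h ≤ W - 1 := tsum_indicator_ne_zero_one_div_rwt_le hβ hγ
  have hv : ∑' h, v h ≤ (W - 1) / p := tsum_indicator_dvd_one_div_rwt_le hp.pos hβ hγ
  have hu0 : 0 ≤ ∑' h, u h :=
    tsum_nonneg fun h => Set.indicator_nonneg (fun h _ => one_div_rwt_nonneg h) h
  have hp2 : (2 : ℝ) ≤ p := by exact_mod_cast hp.two_le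
  have hc : c ≤ 2 * N / p := by
    simp only [c]
    rw [Nat.cast_sub hp.one_le, Nat.cast_one, div_le_div_iff₀ (by linarith) (by linarith)]
    nlinarith [(by positivity : 0 ≤ N)]
  have hR : Summable fun h => c * u h + N * v h :=
    ((hg.indicator _).mul_left c).add ((hg.indicator _).mul_left N)
  have hpt := card_filter_mem_dual_mul_one_div_rwt_le (d := d) (β := β) (γ := γ) hp
  calc ∑ z ∈ genSet d p, Pqual d β γ p z
      = ∑' h, (#{z ∈ genSet d p | h ∈ dual d p z} : ℝ) * g h := sum_Pqual_eq_tsum hβ hγ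
    _ ≤ ∑' h, (c * u h + N * v h) :=
        (hR.of_nonneg_of_le (fun h => mul_nonneg (Nat.cast_nonneg _) (one_div_rwt_nonneg h))
          hpt).tsum_le_tsum hpt hR
    _ = c * ∑' h, u h + N * ∑' h, v h := by
        rw [((hg.indicator _).mul_left c).tsum_add ((hg.indicator _).mul_left N), tsum_mul_left,
          tsum_mul_left]
    _ ≤ 2 * N / p * (W - 1) + N * ((W - 1) / p) :=
        add_le_add (mul_le_mul hc hu hu0 (by positivity))
          (mul_le_mul_of_nonneg_left hv (by positivity))
    _ ≤ N * (Vd d β γ / p) := by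
        rw [Vd]
        have : 0 ≤ 3 * N / p := by positivity
        have : 2 * N / p * (W - 1) + N * ((W - 1) / p) = N * (3 * W / p) - 3 * N / p := by ring
        linarith

end Average

theorem many_good_generating_vectors_Pqual_general
    (p : ℕ) (hp : p.Prime) (d : ℕ) (β : ℝ) (hβ : 1 < β)
    (τ : ℝ) (hτ : τ ∈ Set.Ioo (0 : ℝ) 1)
    (γ : ℕ → ℝ) (hγpos : ∀ j, 0 < γ j) :
    ⌈τ * (((p - 1) ^ d : ℕ) : ℝ)⌉₊ ≤
      ((genSet d p).filter fun z =>
        Pqual d β γ p z ≤ 1 / (1 - τ) * (Vd d β γ / p)).card := by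
  rw [← card_genSet d p]
  refine ceil_mul_card_le_card_filter_le _ (fun z _ => tsum_nonneg fun _ => one_div_rwt_nonneg _)
    hτ.2 (div_pos (Vd_pos fun j => (hγpos j).le) (by exact_mod_cast hp.pos)) ?_
  rw [card_genSet]
  exact sum_Pqual_le hp hβ hγpos

/-- Corollary 2: there exist at least `⌈τ(p−1)^d⌉` generating vectors `z ∈ {1,…,p−1}^d`
with `P_{β,γ}(p,z) ≤ (1/(1−τ)) V_d(β,γ)/p`. -/
theorem many_good_generating_vectors_Pqual
    (p : ℕ) (hp : p.Prime) (d : ℕ) (hd : 0 < d) (β : ℝ) (hβ : 1 < β)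
    (τ : ℝ) (hτ : τ ∈ Set.Ioo (0 : ℝ) 1)
    (γ : ℕ → ℝ) (hγpos : ∀ j, 0 < γ j) (hγle : ∀ j, γ j ≤ 1) :
    ⌈τ * (((p - 1) ^ d : ℕ) : ℝ)⌉₊ ≤
      ((genSet d p).filter fun z =>
        Pqual d β γ p z ≤ 1 / (1 - τ) * (Vd d β γ / p)).card :=
  many_good_generating_vectors_Pqual_general p hp d β hβ τ hτ γ hγpos
end
end

section
/- Let d ∈ ℕ, let p be a prime, let z ∈ {1,…,p−1}^d, and let a : ℤ^d → ℂ be absolutely summable. Define f(x) := ∑_{h∈ℤ^d} a_h e^{2πi h·x} for x ∈ ℝ^d. Then ∫_{[0,1]^d} | (1/p) ∑_{k=0}^{p−1} f({k z/p + u}) − a_0 |² du = ∑_{h ∈ ℤ^d \ {0}, h·z ≡ 0 (mod p)} |a_h|², where {·} denotes the componentwise fractional part. (That is, the mean square error of the randomly shifted lattice rule over a uniform shift u ∈ [0,1]^d equals the sum of the squared Fourier coefficients over the nonzero dual lattice points.) -/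
/-!
Expand `f` in its absolutely convergent Fourier series. Integer frequencies do not see the
fractional parts, and the character sum `∑_{k<p} e(k m / p)` is `p` or `0` according as `p ∣ m`,
so at every shift `u` the error of the lattice rule is the Fourier series `∑ a_h e(h·u)` restricted
to the nonzero dual lattice. Orthonormality of `u ↦ e(h·u)` on the unit cube (Parseval) then turns
its mean square into `∑ |a_h|²`.
-/

open scoped BigOperators
open Classical

noncomputable section

open MeasureTheory

open Complex

namespace LatticeRule

def e (t : ℝ) : ℂ := exp (2 * Real.pi * I * t)

lemma norm_e (t : ℝ) : ‖e t‖ = 1 := by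
  rw [e, show 2 * (Real.pi : ℂ) * I * t = ((2 * Real.pi * t : ℝ) : ℂ) * I by push_cast; ring,
    norm_exp_ofReal_mul_I]

lemma e_add (s t : ℝ) : e (s + t) = e s * e t := by
  rw [e, e, e, ← exp_add]; push_cast; ring_nf

lemma e_intCast (n : ℤ) : e n = 1 := by
  rw [e, show 2 * (Real.pi : ℂ) * I * ((n : ℝ) : ℂ) = n * (2 * Real.pi * I) by push_cast; ring,
    exp_int_mul_two_pi_mul_I]

lemma e_eq_one_iff (t : ℝ) : e t = 1 ↔ ∃ n : ℤ, t = n := by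
  have h2πI : 2 * (Real.pi : ℂ) * I ≠ 0 := by simp [Real.pi_ne_zero]
  rw [e, exp_eq_one_iff]
  refine exists_congr fun n => ?_
  rw [mul_comm (n : ℂ), mul_right_inj' h2πI]
  exact_mod_cast Iff.rfl

lemma e_natCast_mul (k : ℕ) (t : ℝ) : e (k * t) = e t ^ k := by
  rw [e, e, ← exp_nat_mul]; push_cast; ring_nf

lemma star_e (t : ℝ) : star (e t) = e (-t) := by
  rw [e, e, ← starRingEnd_apply, ← exp_conj]
  simp only [map_mul, conj_I, conj_ofReal, map_ofNat]
  push_cast; ring_nf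

lemma e_sum {ι : Type*} (s : Finset ι) (t : ι → ℝ) : e (∑ i ∈ s, t i) = ∏ i ∈ s, e (t i) := by
  simp only [e, ← exp_sum, ofReal_sum, Finset.mul_sum]

@[fun_prop]
lemma continuous_e : Continuous e := by
  unfold e; fun_prop

lemma e_sum_mul_fract {ι : Type*} (s : Finset ι) (h : ι → ℤ) (y : ι → ℝ) :
    e (∑ i ∈ s, h i * Int.fract (y i)) = e (∑ i ∈ s, h i * y i) := by
  have hshift : ∑ i ∈ s, (h i : ℝ) * Int.fract (y i)
      = ∑ i ∈ s, h i * y i + ((-∑ i ∈ s, h i * ⌊y i⌋ : ℤ) : ℝ) := by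
    simp only [Int.fract, mul_sub, Finset.sum_sub_distrib]
    push_cast
    ring
  rw [hshift, e_add, e_intCast, mul_one]

lemma sum_range_e_mul_div {p : ℕ} (hp : p ≠ 0) (m : ℤ) :
    ∑ k ∈ Finset.range p, e (k * (m / p)) = if (p : ℤ) ∣ m then (p : ℂ) else 0 := by
  have hp' : (p : ℝ) ≠ 0 := Nat.cast_ne_zero.mpr hp
  simp_rw [e_natCast_mul]
  split_ifs with hdvd
  · obtain ⟨c, rfl⟩ := hdvd
    rw [show ((p * c : ℤ) : ℝ) / p = (c : ℝ) by push_cast; field_simp, e_intCast]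
    simp
  · have hne : e (m / p) ≠ 1 := by
      rw [Ne, e_eq_one_iff]
      rintro ⟨n, hn⟩
      rw [div_eq_iff hp'] at hn
      exact hdvd ⟨n, by rw [mul_comm]; exact_mod_cast hn⟩
    rw [geom_sum_eq hne, ← e_natCast_mul, mul_div_cancel₀ _ hp', e_intCast, sub_self, zero_div]

lemma integral_Icc_e_intCast_mul (m : ℤ) :
    ∫ x in Set.Icc (0 : ℝ) 1, e (m * x) = if m = 0 then 1 else 0 := by
  split_ifs with hm
  · simp [hm, e]
  · have hc : 2 * (Real.pi : ℂ) * I * m ≠ 0 := by simp [Real.pi_ne_zero, hm]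
    have he : ∀ x : ℝ, e (m * x) = exp (2 * Real.pi * I * m * x) := fun x => by
      rw [e]; push_cast; ring_nf
    rw [integral_Icc_eq_integral_Ioc, ← intervalIntegral.integral_of_le zero_le_one]
    simp_rw [he, integral_exp_mul_complex hc]
    rw [ofReal_one, ofReal_zero, mul_zero, exp_zero, mul_one,
      show 2 * (Real.pi : ℂ) * I * m = m * (2 * Real.pi * I) by ring,
      exp_int_mul_two_pi_mul_I, sub_self, zero_div]

lemma ofReal_norm_tsum_sq {κ : Type*} {g : κ → ℂ} (hg : Summable fun k => ‖g k‖) :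
    ((‖∑' k, g k‖ ^ 2 : ℝ) : ℂ) = ∑' q : κ × κ, g q.1 * star (g q.2) := by
  rw [← normSq_eq_norm_sq, ← mul_conj, starRingEnd_apply, tsum_star,
    tsum_mul_tsum_of_summable_norm hg (by simpa only [norm_star] using hg)]

lemma tsum_prod_ite_eq {κ M : Type*} [DecidableEq κ] [AddCommMonoid M] [TopologicalSpace M]
    (g : κ → M) :
    ∑' q : κ × κ, (if q.1 = q.2 then g q.1 else 0) = ∑' k, g k := by
  have hdiag : Function.Injective fun k : κ => (k, k) := fun k l hkl => congrArg Prod.fst hkl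
  rw [← hdiag.tsum_eq]
  · simp
  · rintro ⟨k, l⟩ hkl
    obtain rfl : k = l := by by_contra hne; simp [hne] at hkl
    exact ⟨k, rfl⟩

section UnitCube

def unitCube (ι : Type*) : Set (ι → ℝ) := Set.univ.pi fun _ => Set.Icc 0 1

variable {ι : Type*} [Fintype ι]

lemma volume_unitCube : volume (unitCube ι) = 1 := by
  rw [unitCube, volume_pi_pi]
  simp [Real.volume_Icc]

lemma integral_unitCube_prod (g : ι → ℝ → ℂ) :
    ∫ u in unitCube ι, ∏ i, g i (u i)
      = ∏ i, ∫ x in Set.Icc (0 : ℝ) 1, g i x := by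
  rw [unitCube, volume_pi, Measure.restrict_pi_pi]
  exact integral_fintype_prod_eq_prod g

lemma integral_unitCube_e_sum_mul (w : ι → ℤ) :
    ∫ u in unitCube ι, e (∑ i, w i * u i)
      = if w = 0 then 1 else 0 := by
  simp_rw [e_sum, integral_unitCube_prod fun i x => e (w i * x), integral_Icc_e_intCast_mul]
  split_ifs with hw
  · simp [hw]
  · obtain ⟨i, hi⟩ := Function.ne_iff.mp hw
    exact Finset.prod_eq_zero (Finset.mem_univ i) (if_neg hi)

lemma integral_unitCube_e_mul_star_e (h h' : ι → ℤ) :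
    ∫ u in unitCube ι,
        e (∑ i, h i * u i) * star (e (∑ i, h' i * u i))
      = if h = h' then 1 else 0 := by
  have hdiff : ∀ u : ι → ℝ, e (∑ i, h i * u i) * star (e (∑ i, h' i * u i))
      = e (∑ i, ((h - h') i : ℤ) * u i) := fun u => by
    rw [star_e, ← e_add, ← sub_eq_add_neg, ← Finset.sum_sub_distrib]
    push_cast [Pi.sub_apply, sub_mul]
    rfl
  simp_rw [hdiff, integral_unitCube_e_sum_mul, sub_eq_zero]

theorem integral_unitCube_norm_tsum_sq (S : Set (ι → ℤ)) {c : (ι → ℤ) → ℂ}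
    (hc : Summable fun h : S => ‖c h‖) :
    ∫ u in unitCube ι, ‖∑' h : S, c h * e (∑ i, h.1 i * u i)‖ ^ 2 = ∑' h : S, ‖c h‖ ^ 2 := by
  set F : S × S → (ι → ℝ) → ℂ := fun q u =>
    c q.1 * e (∑ i, q.1.1 i * u i) * star (c q.2 * e (∑ i, q.2.1 i * u i))
  have hF_norm : ∀ q u, ‖F q u‖ = ‖c q.1‖ * ‖c q.2‖ := fun q u => by
    simp only [F, norm_mul, norm_star, norm_e, mul_one]
  have hF_int : ∀ q, IntegrableOn (F q) (unitCube ι) := fun q =>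
    (Continuous.continuousOn (by simp only [F]; fun_prop)).integrableOn_compact
      (isCompact_univ_pi fun _ => isCompact_Icc)
  have hF_sum : Summable fun q => ∫ u in unitCube ι, ‖F q u‖ := by
    simp only [hF_norm, setIntegral_const, smul_eq_mul, measureReal_def, volume_unitCube,
      ENNReal.toReal_one, one_mul]
    exact hc.mul_of_nonneg hc (fun _ => norm_nonneg _) (fun _ => norm_nonneg _)
  have hF_integral : ∀ q, ∫ u in unitCube ι, F q u
      = if q.1 = q.2 then ((‖c q.1‖ ^ 2 : ℝ) : ℂ) else 0 := fun q => by
    have hsplit : ∀ u, F q u = c q.1 * star (c q.2) *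
        (e (∑ i, q.1.1 i * u i) * star (e (∑ i, q.2.1 i * u i))) := fun u => by
      simp only [F, star_mul']; ring
    simp_rw [hsplit, integral_const_mul, integral_unitCube_e_mul_star_e, Subtype.ext_iff]
    split_ifs with hq
    · rw [← hq, mul_one, ← starRingEnd_apply, mul_conj, normSq_eq_norm_sq]
    · rw [mul_zero]
  suffices ((∫ u in unitCube ι, ‖∑' h : S, c h * e (∑ i, h.1 i * u i)‖ ^ 2 : ℝ) : ℂ)
      = ((∑' h : S, ‖c h‖ ^ 2 : ℝ) : ℂ) from mod_cast this
  calc ((∫ u in unitCube ι, ‖∑' h : S, c h * e (∑ i, h.1 i * u i)‖ ^ 2 : ℝ) : ℂ)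
      = ∫ u in unitCube ι, ∑' q, F q u := by
        rw [← integral_complex_ofReal]
        refine integral_congr_ae (Filter.Eventually.of_forall fun u => ?_)
        exact ofReal_norm_tsum_sq (hc.congr fun h => by rw [norm_mul, norm_e, mul_one])
    _ = ∑' q, ∫ u in unitCube ι, F q u :=
        (integral_tsum_of_summable_integral_norm hF_int hF_sum).symm
    _ = ∑' h : S, ((‖c h‖ ^ 2 : ℝ) : ℂ) := by
        rw [tsum_congr hF_integral]
        exact tsum_prod_ite_eq fun h : S => ((‖c h‖ ^ 2 : ℝ) : ℂ)
    _ = ((∑' h : S, ‖c h‖ ^ 2 : ℝ) : ℂ) := (ofReal_tsum _).symm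

end UnitCube

section Lattice

variable {d p : ℕ}

lemma e_sum_mul_lattice_point (z : Fin d → ℕ) (h : Fin d → ℤ) (k : ℕ) (u : Fin d → ℝ) :
    e (∑ j, h j * Int.fract (((k * z j : ℕ) : ℝ) / p + u j))
      = e (k * ((∑ j, h j * z j : ℤ) / p)) * e (∑ j, h j * u j) := by
  rw [e_sum_mul_fract, ← e_add]
  push_cast
  simp only [mul_add, Finset.sum_add_distrib, Finset.sum_div, Finset.mul_sum]
  congr 2
  exact Finset.sum_congr rfl fun j _ => by ring

lemma lattice_rule_eq_tsum_ite (hp : p ≠ 0) (z : Fin d → ℕ) {a : (Fin d → ℤ) → ℂ}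
    (ha : Summable fun h => ‖a h‖) {f : (Fin d → ℝ) → ℂ}
    (hf : ∀ x, f x = ∑' h, a h * e (∑ j, h j * x j)) (u : Fin d → ℝ) :
    1 / (p : ℂ) * ∑ k ∈ Finset.range p, f (fun j => Int.fract (((k * z j : ℕ) : ℝ) / p + u j))
      = ∑' h, if (p : ℤ) ∣ ∑ j, h j * z j then a h * e (∑ j, h j * u j) else 0 := by
  have hsummable : ∀ k ∈ Finset.range p, Summable fun h : Fin d → ℤ =>
      a h * (e (k * ((∑ j, h j * z j : ℤ) / p)) * e (∑ j, h j * u j)) := fun k _ =>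
    Summable.of_norm (ha.congr fun h => by simp only [norm_mul, norm_e, mul_one])
  simp_rw [hf, e_sum_mul_lattice_point]
  rw [← Summable.tsum_finsetSum hsummable, ← tsum_mul_left]
  refine tsum_congr fun h => ?_
  have hfactor : ∑ k ∈ Finset.range p,
      a h * (e (k * ((∑ j, h j * z j : ℤ) / p)) * e (∑ j, h j * u j))
        = a h * e (∑ j, h j * u j) * ∑ k ∈ Finset.range p, e (k * ((∑ j, h j * z j : ℤ) / p)) := by
    rw [Finset.mul_sum]
    exact Finset.sum_congr rfl fun k _ => by ring
  rw [hfactor, sum_range_e_mul_div hp]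
  split_ifs
  · field_simp
  · simp

lemma tsum_ite_dvd_eq_add_tsum_dual (z : Fin d → ℕ) {W : (Fin d → ℤ) → ℂ} (hW : Summable W) :
    ∑' h, (if (p : ℤ) ∣ ∑ j, h j * z j then W h else 0) = W 0 + ∑' h : dual d p z, W h := by
  have hsummable : Summable fun h => if (p : ℤ) ∣ ∑ j, h j * z j then W h else 0 :=
    (hW.indicator {h | (p : ℤ) ∣ ∑ j, h j * z j}).congr fun h => by simp [Set.indicator]
  rw [hsummable.tsum_eq_add_tsum_ite 0, tsum_subtype]
  congr 1
  · simp
  · refine tsum_congr fun h => ?_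
    by_cases h0 : h = 0
    · simp [h0, dual]
    · simp [h0, dual, Set.indicator]

end Lattice

end LatticeRule

open LatticeRule

theorem shifted_lattice_rule_mean_square_error_general
    (d : ℕ) (p : ℕ) (hp : p.Prime)
    (z : Fin d → ℕ)
    (a : (Fin d → ℤ) → ℂ) (ha : Summable fun h : Fin d → ℤ => ‖a h‖)
    (f : (Fin d → ℝ) → ℂ)
    (hf : ∀ x : Fin d → ℝ, f x = ∑' h : Fin d → ℤ,
      a h * Complex.exp (2 * (Real.pi : ℂ) * Complex.I * ∑ j, (h j : ℂ) * (x j : ℂ))) :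
    (∫ u in Set.univ.pi fun _ : Fin d => Set.Icc (0 : ℝ) 1,
        ‖(1 / (p : ℂ)) * ∑ k ∈ Finset.range p,
            f (fun j => Int.fract (((k * z j : ℕ) : ℝ) / (p : ℝ) + u j)) - a 0‖ ^ 2) =
      ∑' h : dual d p z, ‖a h.1‖ ^ 2 := by
  have hf_e : ∀ x, f x = ∑' h, a h * e (∑ j, h j * x j) := fun x => by
    simp only [hf, e, ofReal_sum, ofReal_mul, ofReal_intCast]
  have hsummable : ∀ u : Fin d → ℝ, Summable fun h => a h * e (∑ j, h j * u j) := fun u =>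
    Summable.of_norm (ha.congr fun h => by rw [norm_mul, norm_e, mul_one])
  have herror : ∀ u : Fin d → ℝ,
      1 / (p : ℂ) * ∑ k ∈ Finset.range p, f (fun j => Int.fract (((k * z j : ℕ) : ℝ) / p + u j))
        - a 0 = ∑' h : dual d p z, a h * e (∑ j, h.1 j * u j) := fun u => by
    rw [lattice_rule_eq_tsum_ite hp.ne_zero z ha hf_e, tsum_ite_dvd_eq_add_tsum_dual z
      (hsummable u)]
    simp [e]
  simp_rw [herror]
  exact integral_unitCube_norm_tsum_sq (dual d p z) (ha.subtype _)

/-- Parseval for the shifted lattice rule: the mean square error of the randomly shifted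
rank-1 lattice rule over a uniform shift `u ∈ [0,1]^d` equals the sum of the squared
Fourier coefficients over the nonzero points of the dual lattice. -/
theorem shifted_lattice_rule_mean_square_error
    (d : ℕ) (hd : 0 < d) (p : ℕ) (hp : p.Prime)
    (z : Fin d → ℕ) (hz : z ∈ genSet d p)
    (a : (Fin d → ℤ) → ℂ) (ha : Summable fun h : Fin d → ℤ => ‖a h‖)
    (f : (Fin d → ℝ) → ℂ)
    (hf : ∀ x : Fin d → ℝ, f x = ∑' h : Fin d → ℤ,
      a h * Complex.exp (2 * (Real.pi : ℂ) * Complex.I * ∑ j, (h j : ℂ) * (x j : ℂ))) :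
    (∫ u in Set.univ.pi fun _ : Fin d => Set.Icc (0 : ℝ) 1,
        ‖(1 / (p : ℂ)) * ∑ k ∈ Finset.range p,
            f (fun j => Int.fract (((k * z j : ℕ) : ℝ) / (p : ℝ) + u j)) - a 0‖ ^ 2) =
      ∑' h : dual d p z, ‖a h.1‖ ^ 2 :=
  shifted_lattice_rule_mean_square_error_general d p hp z a ha f hf
end
end
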